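/- Left Logical Equivalence fails in DF/TT: there exist formulas A, B, C such that A and B are mutually TT-derivable but A →df C does not TT-entail B →df C. Concretely, with a single atom p, A = p ∨ ¬p and B = (p →df ¬p) ∨ (¬p →df p) are mutually derivable, yet B →df (p ∧ ¬p) does not entail A →df (p ∧ ¬p). -/
import Mathlib


/-- Trivalent truth values: 0, 1/2, 1. -/
inductive V : Type
  | zero
  | half
  | one
deriving DecidableEq, Repr

open V

/-- Strong Kleene negation. -/
def vneg : V → V
  | zero => one
  | half => half
  | one => zero

/-- Strong Kleene conjunction (minimum). -/
def vmin : V → V → V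
  | one, b => b
  | half, one => half
  | half, half => half
  | half, zero => zero
  | zero, _ => zero

/-- Strong Kleene disjunction (maximum). -/
def vmax : V → V → V
  | zero, b => b
  | half, zero => half
  | half, half => half
  | half, one => one
  | one, _ => one

/-- de Finetti conditional. -/
def df : V → V → V
  | one, c => c
  | _, _ => half

/-- Cooper–Cantwell conditional. -/
def cc : V → V → V
  | zero, _ => half
  | _, c => c

/-- Cooper's quasi-conjunction. -/
def qand : V → V → V
  | zero, _ => zero
  | _, zero => zero
  | one, _ => one
  | _, one => one
  | half, half => half

/-- Cooper's quasi-disjunction. -/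
def qor : V → V → V
  | one, _ => one
  | _, one => one
  | zero, _ => zero
  | _, zero => zero
  | half, half => half

/-- "value ≥ 1/2", i.e. designated / tolerantly true. -/
def des (x : V) : Prop := x ≠ V.zero

/-- Formulas with negation, conjunction, disjunction and the de Finetti
indicative conditional. -/
inductive Form : Type
  | atom : ℕ → Form
  | neg : Form → Form
  | and : Form → Form → Form
  | or : Form → Form → Form
  | cond : Form → Form → Form
deriving DecidableEq

/-- Trivalent DF valuation of formulas, extending a valuation of atoms. -/
def val (v : ℕ → V) : Form → V
  | .atom n => v n
  | .neg A => vneg (val v A)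
  | .and A B => vmin (val v A) (val v B)
  | .or A B => vmax (val v A) (val v B)
  | .cond A B => df (val v A) (val v B)

/-- The Strong Kleene material conditional A ⊃ B := ¬(A ∧ ¬B). -/
def mat (A B : Form) : Form := Form.neg (Form.and A (Form.neg B))

/-- Left Logical Equivalence fails in DF/TT: with A = p ∨ ¬p and
B = (p →df ¬p) ∨ (¬p →df p), A and B are mutually TT-derivable, yet
B →df (p ∧ ¬p) does not TT-entail A →df (p ∧ ¬p). -/
theorem df_lle_fails (p : ℕ) :
    (∀ v : ℕ → V,
      (des (val v (Form.or (Form.atom p) (Form.neg (Form.atom p)))) →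
        des (val v (Form.or (Form.cond (Form.atom p) (Form.neg (Form.atom p)))
          (Form.cond (Form.neg (Form.atom p)) (Form.atom p))))) ∧
      (des (val v (Form.or (Form.cond (Form.atom p) (Form.neg (Form.atom p)))
          (Form.cond (Form.neg (Form.atom p)) (Form.atom p)))) →
        des (val v (Form.or (Form.atom p) (Form.neg (Form.atom p)))))) ∧
    (∃ v : ℕ → V,
      des (val v (Form.cond
        (Form.or (Form.cond (Form.atom p) (Form.neg (Form.atom p)))
          (Form.cond (Form.neg (Form.atom p)) (Form.atom p)))
        (Form.and (Form.atom p) (Form.neg (Form.atom p))))) ∧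
      ¬ des (val v (Form.cond
        (Form.or (Form.atom p) (Form.neg (Form.atom p)))
        (Form.and (Form.atom p) (Form.neg (Form.atom p)))))) := by
  constructor
  · intro v
    constructor <;> intro _ <;> cases h : v p <;> simp [val, vneg, vmax, df, des, h]
  · refine ⟨fun _ => V.one, ?_, ?_⟩ <;> simp [val, vneg, vmax, vmin, df, des]
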